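/- arXiv:2303.06101 — 4 statements merged into one kernel-verified Lean document; each statement's English description precedes it below -/
import Mathlib

section
/- Let A be a real symmetric positive definite n×n matrix, B a real m×n matrix, L a real m×N matrix, and R a real n×N matrix with A R = Bᵀ L, and assume Rᵀ A R is positive definite. Then for every α ∈ ℝᴺ, the supremum over nonzero ω ∈ ℝᴺ of ⟨B(Rω), Lα⟩ / ⟨A(Rω), Rω⟩^{1/2} equals ⟨(Rᵀ A R) α, α⟩^{1/2}. -/
/-!
With `M = Rᵀ A R`, the supremizer relation `A R = Bᵀ L` turns the numerator into `⟨M α, ω⟩`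
and the denominator into `⟨M ω, ω⟩^{1/2}`: the inner product and the norm of the
semi-inner product induced by `M`. In any real semi-inner product space the supremum of
`⟨α, ω⟩ / ‖ω‖` over `ω ≠ 0` is `‖α‖`: Cauchy–Schwarz bounds it and `ω = α` attains it.
-/

open Matrix

open RealInnerProductSpace in
theorem sSup_inner_div_norm_eq_norm {E : Type*} [SeminormedAddCommGroup E]
    [InnerProductSpace ℝ E] (v : E) :
    sSup {r : ℝ | ∃ ω : E, ω ≠ 0 ∧ r = ⟪v, ω⟫ / ‖ω‖} = ‖v‖ := by
  have hle : ∀ ω : E, ⟪v, ω⟫ / ‖ω‖ ≤ ‖v‖ := fun ω =>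
    div_le_of_le_mul₀ (norm_nonneg ω) (norm_nonneg v) (real_inner_le_norm v ω)
  refine le_antisymm (Real.sSup_le (by rintro _ ⟨ω, -, rfl⟩; exact hle ω) (norm_nonneg v)) ?_
  rcases (norm_nonneg v).eq_or_lt with hv | hv
  · refine hv ▸ Real.sSup_nonneg ?_
    rintro _ ⟨ω, -, rfl⟩
    have : ⟪v, ω⟫ = 0 := by
      simpa [← hv] using abs_real_inner_le_norm v ω
    simp [this]
  · refine le_csSup ⟨‖v‖, ?_⟩ ⟨v, ne_zero_of_norm_ne_zero hv.ne', ?_⟩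
    · rintro _ ⟨ω, -, rfl⟩; exact hle ω
    · rw [real_inner_self_eq_norm_mul_norm, mul_self_div_self]

theorem Matrix.PosSemidef.sSup_dotProduct_div_sqrt {ι : Type*} [Fintype ι]
    {M : Matrix ι ι ℝ} (hM : M.PosSemidef) (α : ι → ℝ) :
    sSup {r : ℝ | ∃ ω : ι → ℝ, ω ≠ 0 ∧ r = (M *ᵥ α) ⬝ᵥ ω / √((M *ᵥ ω) ⬝ᵥ ω)}
      = √((M *ᵥ α) ⬝ᵥ α) := by
  let := M.toSeminormedAddCommGroup hM
  let := M.toInnerProductSpace hM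
  have hinner (x y : ι → ℝ) : inner ℝ x y = (M *ᵥ x) ⬝ᵥ y := by
    change (M *ᵥ y) ⬝ᵥ star x = _
    rw [star_trivial, dotProduct_comm, dotProduct_mulVec, ← mulVec_transpose,
      (isHermitian_iff_isSymm.mp hM.isHermitian).eq]
  convert sSup_inner_div_norm_eq_norm α using 6 <;>
    simp only [norm_eq_sqrt_real_inner, hinner]

section CommSemiring

variable {R ι κ μ : Type*} [CommSemiring R] [Fintype ι] [Fintype κ] [Fintype μ]

theorem mulVec_mulVec_dotProduct_mulVec (A : Matrix ι ι R) (P : Matrix ι μ R) (x y : μ → R) :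
    (A *ᵥ (P *ᵥ x)) ⬝ᵥ (P *ᵥ y) = ((Pᵀ * A * P) *ᵥ x) ⬝ᵥ y := by
  rw [← mulVec_mulVec, ← mulVec_mulVec, mulVec_transpose, ← dotProduct_mulVec]

theorem mulVec_mulVec_dotProduct_mulVec_of_mul_eq {A : Matrix ι ι R} {B : Matrix κ ι R}
    {L : Matrix κ μ R} {P : Matrix ι μ R} (h : A * P = Bᵀ * L) (x y : μ → R) :
    (B *ᵥ (P *ᵥ y)) ⬝ᵥ (L *ᵥ x) = ((Pᵀ * A * P) *ᵥ x) ⬝ᵥ y := by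
  rw [← mulVec_mulVec_dotProduct_mulVec, mulVec_mulVec _ A, h, ← mulVec_mulVec, mulVec_transpose,
    ← dotProduct_mulVec, dotProduct_comm]

end CommSemiring

theorem supremizer_enriched_sup_general {n m N : ℕ}
    (A : Matrix (Fin n) (Fin n) ℝ)
    (B : Matrix (Fin m) (Fin n) ℝ)
    (L : Matrix (Fin m) (Fin N) ℝ) (R : Matrix (Fin n) (Fin N) ℝ)
    (hR : A * R = Bᵀ * L) (hRAR : (Rᵀ * A * R).PosDef) :
    ∀ α : Fin N → ℝ,
      sSup {r : ℝ | ∃ ω : Fin N → ℝ, ω ≠ 0 ∧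
          r = (B.mulVec (R.mulVec ω)) ⬝ᵥ (L.mulVec α) /
            Real.sqrt ((A.mulVec (R.mulVec ω)) ⬝ᵥ (R.mulVec ω))}
        = Real.sqrt (((Rᵀ * A * R).mulVec α) ⬝ᵥ α) := by
  intro α
  simp only [mulVec_mulVec_dotProduct_mulVec_of_mul_eq hR, mulVec_mulVec_dotProduct_mulVec]
  exact hRAR.posSemidef.sSup_dotProduct_div_sqrt α

/-- With `A R = Bᵀ L` and `Rᵀ A R` positive definite, for every `α` the
supremum over nonzero `ω` of `⟨B(Rω), Lα⟩ / ⟨A(Rω), Rω⟩^{1/2}` equals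
`⟨(Rᵀ A R) α, α⟩^{1/2}`. -/
theorem supremizer_enriched_sup {n m N : ℕ}
    (A : Matrix (Fin n) (Fin n) ℝ) (hA : A.PosDef)
    (B : Matrix (Fin m) (Fin n) ℝ)
    (L : Matrix (Fin m) (Fin N) ℝ) (R : Matrix (Fin n) (Fin N) ℝ)
    (hR : A * R = Bᵀ * L) (hRAR : (Rᵀ * A * R).PosDef) :
    ∀ α : Fin N → ℝ,
      sSup {r : ℝ | ∃ ω : Fin N → ℝ, ω ≠ 0 ∧
          r = (B.mulVec (R.mulVec ω)) ⬝ᵥ (L.mulVec α) /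
            Real.sqrt ((A.mulVec (R.mulVec ω)) ⬝ᵥ (R.mulVec ω))}
        = Real.sqrt (((Rᵀ * A * R).mulVec α) ⬝ᵥ α) :=
  supremizer_enriched_sup_general A B L R hR hRAR
end

section
/- Let A be a real symmetric positive definite n×n matrix, K a real symmetric positive definite m×m matrix, B a real m×n matrix, and β₀ > 0 such that ⟨B A⁻¹ Bᵀ q, q⟩ ≥ β₀² ⟨Kq, q⟩ for all q ∈ ℝᵐ. Let L be a real m×N matrix of full column rank and define the exact supremizer matrix R = A⁻¹ Bᵀ L. Then: (i) R has full column rank; and (ii) for every subspace W of ℝⁿ that contains the range of R (in particular, for the reduced space spanned by the columns of [Y, R] for any n×N' matrix Y) and every nonzero q in the range of L, sup over nonzero w ∈ W of ⟨Bw, q⟩ / (⟨Aw, w⟩^{1/2} · ⟨Kq, q⟩^{1/2}) ≥ β₀. That is, enrichment by exact supremizers produces reduced spaces satisfying the reduced inf-sup condition with the same constant β₀ as the full problem. -/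
open Matrix

lemma symdot {n : ℕ} {A : Matrix (Fin n) (Fin n) ℝ} (hA : A.IsHermitian) (x y : Fin n → ℝ) :
    A.mulVec x ⬝ᵥ y = x ⬝ᵥ A.mulVec y := by
  rw [dotProduct_mulVec, ← mulVec_transpose, ← conjTranspose_eq_transpose_of_trivial, hA.eq]

lemma posdot {n : ℕ} {A : Matrix (Fin n) (Fin n) ℝ} (hA : A.PosDef) {x : Fin n → ℝ} (hx : x ≠ 0) :
    0 < A.mulVec x ⬝ᵥ x := by
  simpa [dotProduct_comm] using hA.re_dotProduct_pos hx

lemma nonnegdot {n : ℕ} {A : Matrix (Fin n) (Fin n) ℝ} (hA : A.PosDef) (x : Fin n → ℝ) :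
    0 ≤ A.mulVec x ⬝ᵥ x := by
  rcases eq_or_ne x 0 with h | h
  · simp [h]
  · exact (posdot hA h).le

lemma csA {n : ℕ} {A : Matrix (Fin n) (Fin n) ℝ} (hA : A.PosDef) (x y : Fin n → ℝ) :
    (A.mulVec x ⬝ᵥ y) ^ 2 ≤ (A.mulVec x ⬝ᵥ x) * (A.mulVec y ⬝ᵥ y) := by
  have hsym : A.mulVec y ⬝ᵥ x = A.mulVec x ⬝ᵥ y := by
    rw [symdot hA.isHermitian y x, dotProduct_comm]
  have key : ∀ t : ℝ, 0 ≤ (A.mulVec y ⬝ᵥ y) * (t * t) + (2 * (A.mulVec x ⬝ᵥ y)) * t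
      + (A.mulVec x ⬝ᵥ x) := by
    intro t
    have h := nonnegdot hA (x + t • y)
    simp only [mulVec_add, mulVec_smul, add_dotProduct, smul_dotProduct, dotProduct_add,
      dotProduct_smul, smul_eq_mul] at h
    rw [hsym] at h
    ring_nf at h ⊢
    linarith
  have hd := discrim_le_zero key
  rw [discrim] at hd
  nlinarith

/-- Under the full-problem inf-sup bound (Schur complement form)
`⟨B A⁻¹ Bᵀ q, q⟩ ≥ β₀² ⟨Kq, q⟩`, if `L` has full column rank then the exact supremizer
matrix `R = A⁻¹ Bᵀ L` has full column rank, and every subspace `W` containing the range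
of `R` satisfies the reduced inf-sup condition with the same constant `β₀`, for every
nonzero `q` in the range of `L`. -/
theorem exact_supremizer_infSup_stable {n m N : ℕ}
    (A : Matrix (Fin n) (Fin n) ℝ) (hA : A.PosDef)
    (K : Matrix (Fin m) (Fin m) ℝ) (hK : K.PosDef)
    (B : Matrix (Fin m) (Fin n) ℝ) (β₀ : ℝ) (hβ₀ : 0 < β₀)
    (hinfsup : ∀ q : Fin m → ℝ,
      β₀ ^ 2 * ((K.mulVec q) ⬝ᵥ q) ≤ ((B * A⁻¹ * Bᵀ).mulVec q) ⬝ᵥ q)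
    (L : Matrix (Fin m) (Fin N) ℝ) (hL : Function.Injective L.mulVec) :
    Function.Injective (A⁻¹ * Bᵀ * L).mulVec ∧
    ∀ W : Submodule ℝ (Fin n → ℝ),
      (∀ ω : Fin N → ℝ, (A⁻¹ * Bᵀ * L).mulVec ω ∈ W) →
      ∀ q : Fin m → ℝ, q ≠ 0 → (∃ α : Fin N → ℝ, q = L.mulVec α) →
        β₀ ≤ sSup {r : ℝ | ∃ w : Fin n → ℝ, w ∈ W ∧ w ≠ 0 ∧
          r = (B.mulVec w) ⬝ᵥ q /
            (Real.sqrt ((A.mulVec w) ⬝ᵥ w) * Real.sqrt ((K.mulVec q) ⬝ᵥ q))} := by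
  have hAinv : A * A⁻¹ = 1 := mul_nonsing_inv A ((isUnit_iff_isUnit_det A).mp hA.isUnit)
  -- v q := A⁻¹ (Bᵀ q), the exact supremizer of q
  set v : (Fin m → ℝ) → (Fin n → ℝ) := fun q => A⁻¹.mulVec (Bᵀ.mulVec q) with hv
  have hAv : ∀ q, A.mulVec (v q) = Bᵀ.mulVec q := by
    intro q
    rw [hv]
    simp only [mulVec_mulVec, ← Matrix.mul_assoc, hAinv, Matrix.one_mul]
  -- ⟨Bw, q⟩ = ⟨A v(q), w⟩
  have hBwq : ∀ w q, B.mulVec w ⬝ᵥ q = A.mulVec (v q) ⬝ᵥ w := by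
    intro w q
    rw [hAv, dotProduct_comm, dotProduct_mulVec, mulVec_transpose]
  -- Schur form is the A-energy of v(q)
  have hS : ∀ q, ((B * A⁻¹ * Bᵀ).mulVec q) ⬝ᵥ q = A.mulVec (v q) ⬝ᵥ (v q) := by
    intro q
    rw [← mulVec_mulVec, ← mulVec_mulVec]
    exact hBwq (v q) q
  -- v(q) lies in the reduced space when q is in the range of L
  have hvM : ∀ α : Fin N → ℝ, (A⁻¹ * Bᵀ * L).mulVec α = v (L.mulVec α) := by
    intro α
    rw [hv, ← mulVec_mulVec, ← mulVec_mulVec]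
  -- injectivity
  have hker : ∀ ω : Fin N → ℝ, (A⁻¹ * Bᵀ * L).mulVec ω = 0 → ω = 0 := by
    intro ω hω
    have hq0 : L.mulVec ω = 0 := by
      by_contra hne
      have h1 := hinfsup (L.mulVec ω)
      rw [hS, ← hvM, hω] at h1
      simp only [mulVec_zero, dotProduct_zero] at h1
      exact absurd h1 (not_le.2 (mul_pos (pow_pos hβ₀ 2) (posdot hK hne)))
    exact hL (by rw [hq0, mulVec_zero])
  constructor
  · intro a b hab
    have : (A⁻¹ * Bᵀ * L).mulVec (a - b) = 0 := by
      rw [mulVec_sub, hab, sub_self]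
    exact sub_eq_zero.mp (hker _ this)
  · intro W hW q hq hrange
    obtain ⟨α, hα⟩ := hrange
    set Sq : ℝ := A.mulVec (v q) ⬝ᵥ (v q) with hSq
    set Kq : ℝ := K.mulVec q ⬝ᵥ q with hKq
    have hKqpos : 0 < Kq := posdot hK hq
    have hSqpos : 0 < Sq := lt_of_lt_of_le (mul_pos (pow_pos hβ₀ 2) hKqpos)
      (by rw [hSq, ← hS]; exact hinfsup q)
    have hvne : v q ≠ 0 := by
      intro h0
      rw [hSq, h0] at hSqpos
      simp at hSqpos
    have hvW : v q ∈ W := by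
      have := hW α
      rwa [hvM, ← hα] at this
    -- the candidate value
    have hmem : Real.sqrt Sq / Real.sqrt Kq ∈ {r : ℝ | ∃ w : Fin n → ℝ, w ∈ W ∧ w ≠ 0 ∧
        r = (B.mulVec w) ⬝ᵥ q /
          (Real.sqrt ((A.mulVec w) ⬝ᵥ w) * Real.sqrt ((K.mulVec q) ⬝ᵥ q))} := by
      refine ⟨v q, hvW, hvne, ?_⟩
      rw [hBwq, ← hSq, ← hKq]
      have hs : Real.sqrt Sq * Real.sqrt Sq = Sq := Real.mul_self_sqrt hSqpos.le
      rw [div_eq_div_iff (Real.sqrt_pos.2 hKqpos).ne'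
        (mul_pos (Real.sqrt_pos.2 hSqpos) (Real.sqrt_pos.2 hKqpos)).ne']
      rw [← mul_assoc, hs]
    -- bounded above
    have hbdd : BddAbove {r : ℝ | ∃ w : Fin n → ℝ, w ∈ W ∧ w ≠ 0 ∧
        r = (B.mulVec w) ⬝ᵥ q /
          (Real.sqrt ((A.mulVec w) ⬝ᵥ w) * Real.sqrt ((K.mulVec q) ⬝ᵥ q))} := by
      refine ⟨Real.sqrt Sq / Real.sqrt Kq, ?_⟩
      rintro r ⟨w, _, hw0, rfl⟩
      have hAww : 0 < A.mulVec w ⬝ᵥ w := posdot hA hw0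
      have hnum : B.mulVec w ⬝ᵥ q ≤ Real.sqrt Sq * Real.sqrt (A.mulVec w ⬝ᵥ w) := by
        rw [hBwq]
        calc A.mulVec (v q) ⬝ᵥ w ≤ |A.mulVec (v q) ⬝ᵥ w| := le_abs_self _
          _ = Real.sqrt ((A.mulVec (v q) ⬝ᵥ w) ^ 2) := (Real.sqrt_sq_eq_abs _).symm
          _ ≤ Real.sqrt (Sq * (A.mulVec w ⬝ᵥ w)) := Real.sqrt_le_sqrt (csA hA (v q) w)
          _ = Real.sqrt Sq * Real.sqrt (A.mulVec w ⬝ᵥ w) := Real.sqrt_mul hSqpos.le _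
      rw [div_le_div_iff₀ (by positivity) (by positivity)]
      calc (B.mulVec w ⬝ᵥ q) * Real.sqrt Kq
          ≤ (Real.sqrt Sq * Real.sqrt (A.mulVec w ⬝ᵥ w)) * Real.sqrt Kq := by
            have : (0:ℝ) ≤ Real.sqrt Kq := Real.sqrt_nonneg _
            nlinarith
        _ = Real.sqrt Sq * (Real.sqrt (A.mulVec w ⬝ᵥ w) * Real.sqrt ((K.mulVec q) ⬝ᵥ q)) := by
            rw [← hKq]; ring
    -- conclude
    have h1 : β₀ ≤ Real.sqrt Sq / Real.sqrt Kq := by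
      rw [le_div_iff₀ (Real.sqrt_pos.2 hKqpos)]
      have : β₀ * Real.sqrt Kq = Real.sqrt (β₀ ^ 2 * Kq) := by
        rw [Real.sqrt_mul (sq_nonneg β₀), Real.sqrt_sq hβ₀.le]
      rw [this]
      exact Real.sqrt_le_sqrt (by rw [hSq, ← hS]; exact hinfsup q)
    exact h1.trans (le_csSup hbdd hmem)
end

section
/- Let M and K be real symmetric positive definite n×n matrices, K_μ a real n×n matrix, and constants α̃₀ > 0, c_Ω > 0, β > 0 such that ⟨K_μ q, q⟩ ≥ α̃₀ ⟨Kq, q⟩ (coercivity) and c_Ω² ⟨Mq, q⟩ ≤ ⟨Kq, q⟩ (Poincaré inequality) hold for all q ∈ ℝⁿ. Let F_N, U_N, Q_N be subspaces of ℝⁿ with Q_N = U_N (aggregated state and adjoint spaces). Then for every nonzero q ∈ Q_N, sup over nonzero pairs (v, z) ∈ F_N × U_N of (⟨K_μ z, q⟩ − ⟨Mv, q⟩) / ((2β⟨Mv, v⟩ + ⟨Mz, z⟩)^{1/2} · ⟨Kq, q⟩^{1/2}) ≥ c_Ω · α̃₀; that is, the aggregation-stabilized reduced problem satisfies the inf-sup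 condition with constant c_Ω α̃₀. -/
/-! Since `Q_N = U_N`, the adjoint vector `q` is itself an admissible state `z`, and the pair
`(0, q)` gives the quotient `⟨K_μ q, q⟩ / (‖q‖_M ‖q‖_K) ≥ α̃₀ ‖q‖_K / ‖q‖_M ≥ c_Ω α̃₀` by coercivity
and the Poincaré inequality. It remains to see that the quotient is bounded above, so that the
supremum is a genuine one: by Cauchy–Schwarz in the `M`-inner product each term of the numerator
is at most a constant times an `M`-norm, and for `β > 0` both norms are controlled by the
denominator. -/

open Matrix

namespace Matrix

variable {n : Type*} [Fintype n]

theorem PosSemidef.mulVec_dotProduct_nonneg {M : Matrix n n ℝ} (hM : M.PosSemidef)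
    (x : n → ℝ) : 0 ≤ M *ᵥ x ⬝ᵥ x := by
  simpa [dotProduct_comm] using hM.dotProduct_mulVec_nonneg x

theorem PosDef.mulVec_dotProduct_pos {M : Matrix n n ℝ} (hM : M.PosDef) {x : n → ℝ}
    (hx : x ≠ 0) : 0 < M *ᵥ x ⬝ᵥ x := by
  simpa [dotProduct_comm] using hM.dotProduct_mulVec_pos hx

theorem PosSemidef.abs_mulVec_dotProduct_le {M : Matrix n n ℝ} (hM : M.PosSemidef)
    (x y : n → ℝ) : |M *ᵥ x ⬝ᵥ y| ≤ √(M *ᵥ x ⬝ᵥ x) * √(M *ᵥ y ⬝ᵥ y) := by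
  have hsymm : M *ᵥ y ⬝ᵥ x = M *ᵥ x ⬝ᵥ y := by
    have hT : Mᵀ = M := by simpa using hM.isHermitian.eq
    rw [dotProduct_comm, dotProduct_mulVec, ← mulVec_transpose, hT]
  classical
  have hCS := LinearMap.BilinForm.apply_mul_apply_le_of_forall_zero_le (toBilin' M)
    (fun z => by simpa [toBilin'_apply'] using hM.dotProduct_mulVec_nonneg z) y x
  simp only [toBilin'_apply', dotProduct_comm y, dotProduct_comm x, hsymm] at hCS
  rw [← Real.sqrt_mul (hM.mulVec_dotProduct_nonneg x)]
  exact Real.abs_le_sqrt (by nlinarith)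

theorem PosDef.exists_mulVec_dotProduct_le {M : Matrix n n ℝ} (hM : M.PosDef)
    (A : Matrix n n ℝ) (q : n → ℝ) :
    ∃ C, 0 ≤ C ∧ ∀ z, A *ᵥ z ⬝ᵥ q ≤ C * √(M *ᵥ z ⬝ᵥ z) := by
  classical
  -- Riesz representative of `z ↦ ⟨A z, q⟩` for the `M`-inner product
  set u := M⁻¹ *ᵥ (Aᵀ *ᵥ q)
  have hMu : M *ᵥ u = Aᵀ *ᵥ q := by
    rw [mulVec_mulVec, mul_nonsing_inv _ (isUnit_iff_ne_zero.mpr hM.det_pos.ne'), one_mulVec]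
  refine ⟨√(M *ᵥ u ⬝ᵥ u), Real.sqrt_nonneg _, fun z => ?_⟩
  calc A *ᵥ z ⬝ᵥ q = M *ᵥ u ⬝ᵥ z := by
        rw [hMu, dotProduct_comm (Aᵀ *ᵥ q), dotProduct_transpose_mulVec, dotProduct_comm]
    _ ≤ |M *ᵥ u ⬝ᵥ z| := le_abs_self _
    _ ≤ _ := hM.posSemidef.abs_mulVec_dotProduct_le u z

theorem PosDef.exists_sub_le_mul_sqrt {M : Matrix n n ℝ}
    (hM : M.PosDef) {c : ℝ} (hc : 0 < c) (A B : Matrix n n ℝ) (q : n → ℝ) :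
    ∃ C, 0 ≤ C ∧ ∀ v z,
      A *ᵥ z ⬝ᵥ q - B *ᵥ v ⬝ᵥ q ≤ C * √(c * (M *ᵥ v ⬝ᵥ v) + M *ᵥ z ⬝ᵥ z) := by
  obtain ⟨C₁, hC₁, hA⟩ := hM.exists_mulVec_dotProduct_le A q
  obtain ⟨C₂, hC₂, hB⟩ := hM.exists_mulVec_dotProduct_le (-B) q
  refine ⟨C₁ + C₂ / √c, by positivity, fun v z => ?_⟩
  have hv := hM.posSemidef.mulVec_dotProduct_nonneg v
  have hz := hM.posSemidef.mulVec_dotProduct_nonneg z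
  set s := c * (M *ᵥ v ⬝ᵥ v) + M *ᵥ z ⬝ᵥ z
  have hz_le : √(M *ᵥ z ⬝ᵥ z) ≤ √s := Real.sqrt_le_sqrt (by nlinarith)
  have hv_le : √c * √(M *ᵥ v ⬝ᵥ v) ≤ √s := by
    rw [← Real.sqrt_mul hc.le]
    exact Real.sqrt_le_sqrt (by nlinarith)
  have hBv : -(B *ᵥ v ⬝ᵥ q) ≤ C₂ / √c * √s := by
    calc -(B *ᵥ v ⬝ᵥ q) = -B *ᵥ v ⬝ᵥ q := by rw [neg_mulVec, neg_dotProduct]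
      _ ≤ C₂ * √(M *ᵥ v ⬝ᵥ v) := hB v
      _ = C₂ / √c * (√c * √(M *ᵥ v ⬝ᵥ v)) := by field_simp
      _ ≤ C₂ / √c * √s := by gcongr
  calc A *ᵥ z ⬝ᵥ q - B *ᵥ v ⬝ᵥ q ≤ C₁ * √s + C₂ / √c * √s := by
        linarith [hA z, mul_le_mul_of_nonneg_left hz_le hC₁]
    _ = (C₁ + C₂ / √c) * √s := by ring

end Matrix

theorem mul_le_div_sqrt_mul_sqrt {α c k m a : ℝ} (hα : 0 ≤ α) (hm : 0 < m) (ha : 0 < a)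
    (hk : α * a ≤ k) (hcm : c ^ 2 * m ≤ a) : c * α ≤ k / (√m * √a) := by
  have hc : c * √m ≤ √a :=
    calc c * √m ≤ |c| * √m := by gcongr; exact le_abs_self c
      _ = √(c ^ 2 * m) := by rw [Real.sqrt_mul (sq_nonneg c), Real.sqrt_sq_eq_abs]
      _ ≤ √a := Real.sqrt_le_sqrt hcm
  rw [le_div_iff₀ (by positivity)]
  calc c * α * (√m * √a) = α * (c * √m) * √a := by ring
    _ ≤ α * √a * √a := by gcongr
    _ = α * a := by rw [mul_assoc, Real.mul_self_sqrt ha.le]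
    _ ≤ k := hk

theorem aggregation_reduced_infSup_general {n : ℕ}
    (M K Kμ : Matrix (Fin n) (Fin n) ℝ) (hM : M.PosDef) (hK : K.PosDef)
    (α₀ cΩ β : ℝ) (hα₀ : 0 < α₀) (hβ : 0 < β)
    (hcoer : ∀ q : Fin n → ℝ, α₀ * ((K.mulVec q) ⬝ᵥ q) ≤ (Kμ.mulVec q) ⬝ᵥ q)
    (hpoin : ∀ q : Fin n → ℝ, cΩ ^ 2 * ((M.mulVec q) ⬝ᵥ q) ≤ (K.mulVec q) ⬝ᵥ q)
    (FN UN QN : Submodule ℝ (Fin n → ℝ)) (hagg : QN = UN) :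
    ∀ q ∈ QN, q ≠ (0 : Fin n → ℝ) →
      cΩ * α₀ ≤ sSup {r : ℝ | ∃ v z : Fin n → ℝ, v ∈ FN ∧ z ∈ UN ∧ (v, z) ≠ (0, 0) ∧
        r = ((Kμ.mulVec z) ⬝ᵥ q - (M.mulVec v) ⬝ᵥ q) /
          (Real.sqrt (2 * β * ((M.mulVec v) ⬝ᵥ v) + (M.mulVec z) ⬝ᵥ z) *
            Real.sqrt ((K.mulVec q) ⬝ᵥ q))} := by
  intro q hq hq0
  have hKq : 0 < √(K *ᵥ q ⬝ᵥ q) := Real.sqrt_pos.mpr (hK.mulVec_dotProduct_pos hq0)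
  obtain ⟨C, hC, hbound⟩ := hM.exists_sub_le_mul_sqrt (by positivity : 0 < 2 * β) Kμ M q
  have hlower := mul_le_div_sqrt_mul_sqrt hα₀.le (hM.mulVec_dotProduct_pos hq0)
    (hK.mulVec_dotProduct_pos hq0) (hcoer q) (hpoin q)
  refine hlower.trans (le_csSup ⟨C / √(K *ᵥ q ⬝ᵥ q), ?_⟩
    ⟨0, q, FN.zero_mem, hagg ▸ hq, by simp [hq0], by simp⟩)
  rintro r ⟨v, z, -, -, -, rfl⟩
  refine div_le_of_le_mul₀ (by positivity) (by positivity) ?_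
  calc _ ≤ C * √(2 * β * (M *ᵥ v ⬝ᵥ v) + M *ᵥ z ⬝ᵥ z) := hbound v z
    _ = _ := by field_simp

/-- Under coercivity `⟨K_μ q, q⟩ ≥ α̃₀ ⟨Kq, q⟩` and the Poincaré inequality
`c_Ω² ⟨Mq, q⟩ ≤ ⟨Kq, q⟩`, if the reduced adjoint space equals the reduced state space
(`Q_N = U_N`, aggregation), then for every nonzero `q ∈ Q_N` the supremum over nonzero
pairs `(v, z) ∈ F_N × U_N` of
`(⟨K_μ z, q⟩ − ⟨Mv, q⟩) / ((2β⟨Mv,v⟩ + ⟨Mz,z⟩)^{1/2} ⟨Kq,q⟩^{1/2})` is at least `c_Ω α̃₀`. -/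
theorem aggregation_reduced_infSup {n : ℕ}
    (M K Kμ : Matrix (Fin n) (Fin n) ℝ) (hM : M.PosDef) (hK : K.PosDef)
    (α₀ cΩ β : ℝ) (hα₀ : 0 < α₀) (hcΩ : 0 < cΩ) (hβ : 0 < β)
    (hcoer : ∀ q : Fin n → ℝ, α₀ * ((K.mulVec q) ⬝ᵥ q) ≤ (Kμ.mulVec q) ⬝ᵥ q)
    (hpoin : ∀ q : Fin n → ℝ, cΩ ^ 2 * ((M.mulVec q) ⬝ᵥ q) ≤ (K.mulVec q) ⬝ᵥ q)
    (FN UN QN : Submodule ℝ (Fin n → ℝ)) (hagg : QN = UN) :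
    ∀ q ∈ QN, q ≠ (0 : Fin n → ℝ) →
      cΩ * α₀ ≤ sSup {r : ℝ | ∃ v z : Fin n → ℝ, v ∈ FN ∧ z ∈ UN ∧ (v, z) ≠ (0, 0) ∧
        r = ((Kμ.mulVec z) ⬝ᵥ q - (M.mulVec v) ⬝ᵥ q) /
          (Real.sqrt (2 * β * ((M.mulVec v) ⬝ᵥ v) + (M.mulVec z) ⬝ᵥ z) *
            Real.sqrt ((K.mulVec q) ⬝ᵥ q))} :=
  aggregation_reduced_infSup_general M K Kμ hM hK α₀ cΩ β hα₀ hβ hcoer hpoin FN UN QN hagg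
end

section
/- Let M and K be real symmetric positive definite n×n matrices, K_μ a real n×n matrix, and constants α̃₀ > 0, β > 0 such that ⟨K_μ q, q⟩ ≥ α̃₀ ⟨Kq, q⟩ for all q ∈ ℝⁿ. Let Q_f be a real n×N_f matrix of full column rank and let Q_u = Q_λ be a real n×N_u matrix of full column rank (aggregation: the reduced state and adjoint basis matrices coincide). Then the Galerkin reduced saddle point matrix [[2β Q_fᵀ M Q_f, 0, −Q_fᵀ M Q_λ], [0, Q_uᵀ M Q_u, Q_uᵀ K_μᵀ Q_λ], [−Q_λᵀ M Q_f, Q_λᵀ K_μ Q_u, 0]], i.e., the block 3×3 matrix of order N_f + N_u + N_u, is invertible; hence the aggregation-stabilized reduced problem is uniquely solvable. -/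
open Matrix

private lemma posdef_zero {n : ℕ} {A : Matrix (Fin n) (Fin n) ℝ} (hA : A.PosDef)
    {x : Fin n → ℝ} (h : x ⬝ᵥ A *ᵥ x = 0) : x = 0 := by
  by_contra hx
  have := hA.dotProduct_mulVec_pos hx
  rw [star_trivial, h] at this
  exact lt_irrefl 0 this

private lemma posdef_nonneg {n : ℕ} {A : Matrix (Fin n) (Fin n) ℝ} (hA : A.PosDef)
    (x : Fin n → ℝ) : 0 ≤ x ⬝ᵥ A *ᵥ x := by
  simpa [star_trivial] using hA.posSemidef.dotProduct_mulVec_nonneg x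

private lemma dot_conj {n p q : ℕ} (P : Matrix (Fin n) (Fin p) ℝ) (A : Matrix (Fin n) (Fin n) ℝ)
    (Q : Matrix (Fin n) (Fin q) ℝ) (x : Fin p → ℝ) (y : Fin q → ℝ) :
    x ⬝ᵥ (Pᵀ * A * Q) *ᵥ y = (P *ᵥ x) ⬝ᵥ A *ᵥ (Q *ᵥ y) := by
  rw [← Matrix.mulVec_mulVec, ← Matrix.mulVec_mulVec, Matrix.dotProduct_mulVec,
    Matrix.vecMul_transpose]

private lemma dot_transpose {n : ℕ} (A : Matrix (Fin n) (Fin n) ℝ) (v w : Fin n → ℝ) :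
    v ⬝ᵥ Aᵀ *ᵥ w = w ⬝ᵥ A *ᵥ v := by
  rw [Matrix.dotProduct_mulVec, Matrix.vecMul_transpose, dotProduct_comm]

private lemma dot_symm {n : ℕ} {A : Matrix (Fin n) (Fin n) ℝ} (hA : Aᵀ = A) (v w : Fin n → ℝ) :
    v ⬝ᵥ A *ᵥ w = w ⬝ᵥ A *ᵥ v := by
  conv_lhs => rw [← hA]
  exact dot_transpose A v w

theorem aggregation_reduced_system_invertible {n Nf Nu : ℕ}
    (M K Kμ : Matrix (Fin n) (Fin n) ℝ) (hM : M.PosDef) (hK : K.PosDef)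
    (α₀ β : ℝ) (hα₀ : 0 < α₀) (hβ : 0 < β)
    (hcoer : ∀ q : Fin n → ℝ, α₀ * ((K.mulVec q) ⬝ᵥ q) ≤ (Kμ.mulVec q) ⬝ᵥ q)
    (Qf : Matrix (Fin n) (Fin Nf) ℝ) (hQf : Function.Injective Qf.mulVec)
    (Qu : Matrix (Fin n) (Fin Nu) ℝ) (hQu : Function.Injective Qu.mulVec) :
    IsUnit (Matrix.fromBlocks
      (Matrix.fromBlocks ((2 * β) • (Qfᵀ * M * Qf)) 0 0 (Quᵀ * M * Qu))
      (Matrix.fromRows (-(Qfᵀ * M * Qu)) (Quᵀ * Kμᵀ * Qu))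
      (Matrix.fromCols (-(Quᵀ * M * Qf)) (Quᵀ * Kμ * Qu))
      (0 : Matrix (Fin Nu) (Fin Nu) ℝ)) := by
  rw [Matrix.isUnit_iff_isUnit_det, isUnit_iff_ne_zero]
  intro hdet
  obtain ⟨v, hv, hveq⟩ := (Matrix.exists_mulVec_eq_zero_iff).mpr hdet
  set x : Fin Nf → ℝ := fun i => v (Sum.inl (Sum.inl i)) with hxdef
  set y : Fin Nu → ℝ := fun i => v (Sum.inl (Sum.inr i)) with hydef
  set z : Fin Nu → ℝ := fun i => v (Sum.inr i) with hzdef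
  have hvel : v = Sum.elim (Sum.elim x y) z := by
    funext i; rcases i with (i | i) | i <;> rfl
  rw [hvel] at hveq
  rw [Matrix.fromBlocks_mulVec] at hveq
  simp only [Sum.elim_comp_inl, Sum.elim_comp_inr, Matrix.fromBlocks_mulVec,
    Matrix.fromRows_mulVec, Matrix.fromCols_mulVec_sumElim, Matrix.zero_mulVec,
    add_zero, zero_add] at hveq
  have h1 : ((2 * β) • (Qfᵀ * M * Qf)) *ᵥ x + (-(Qfᵀ * M * Qu)) *ᵥ z = 0 := by
    funext i
    have := congrFun hveq (Sum.inl (Sum.inl i))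
    simpa using this
  have h2 : (Quᵀ * M * Qu) *ᵥ y + (Quᵀ * Kμᵀ * Qu) *ᵥ z = 0 := by
    funext i
    have := congrFun hveq (Sum.inl (Sum.inr i))
    simpa using this
  have h3 : (-(Quᵀ * M * Qf)) *ᵥ x + (Quᵀ * Kμ * Qu) *ᵥ y = 0 := by
    funext i
    have := congrFun hveq (Sum.inr i)
    simpa using this
  set a : Fin n → ℝ := Qf *ᵥ x with hadef
  set u : Fin n → ℝ := Qu *ᵥ y with hudef
  set w : Fin n → ℝ := Qu *ᵥ z with hwdef
  have hMs : Mᵀ = M := by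
    have := hM.isHermitian
    rw [← Matrix.conjTranspose_eq_transpose_of_trivial]; exact this
  -- scalar equations
  have s1 : 2 * β * (a ⬝ᵥ M *ᵥ a) + -(a ⬝ᵥ M *ᵥ w) = 0 := by
    have := congrArg (fun t => x ⬝ᵥ t) h1
    simp only [dotProduct_add, Matrix.smul_mulVec, Matrix.neg_mulVec,
      dotProduct_smul, dotProduct_neg, smul_eq_mul, dotProduct_zero] at this
    rw [dot_conj, dot_conj] at this
    exact this
  have s2 : u ⬝ᵥ M *ᵥ u + w ⬝ᵥ Kμ *ᵥ u = 0 := by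
    have := congrArg (fun t => y ⬝ᵥ t) h2
    simp only [dotProduct_add, dotProduct_zero] at this
    rw [dot_conj, dot_conj, dot_transpose] at this
    exact this
  have s3 : -(w ⬝ᵥ M *ᵥ a) + w ⬝ᵥ Kμ *ᵥ u = 0 := by
    have := congrArg (fun t => z ⬝ᵥ t) h3
    simp only [dotProduct_add, Matrix.neg_mulVec, dotProduct_neg, dotProduct_zero] at this
    rw [dot_conj, dot_conj] at this
    exact this
  have hsym : a ⬝ᵥ M *ᵥ w = w ⬝ᵥ M *ᵥ a := dot_symm hMs a w
  have hMaa : 0 ≤ a ⬝ᵥ M *ᵥ a := posdef_nonneg hM a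
  have hMuu : 0 ≤ u ⬝ᵥ M *ᵥ u := posdef_nonneg hM u
  have haa0 : a ⬝ᵥ M *ᵥ a = 0 := by nlinarith
  have huu0 : u ⬝ᵥ M *ᵥ u = 0 := by nlinarith
  have ha : a = 0 := posdef_zero hM haa0
  have hu : u = 0 := posdef_zero hM huu0
  have hx0 : x = 0 := hQf (by rw [show Qf *ᵥ x = 0 from ha, Matrix.mulVec_zero])
  have hy0 : y = 0 := hQu (by rw [show Qu *ᵥ y = 0 from hu, Matrix.mulVec_zero])
  -- now z
  have h2' : (Quᵀ * Kμᵀ * Qu) *ᵥ z = 0 := by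
    rw [hy0, Matrix.mulVec_zero, zero_add] at h2
    exact h2
  have sKw : w ⬝ᵥ Kμ *ᵥ w = 0 := by
    have := congrArg (fun t => z ⬝ᵥ t) h2'
    simp only [dotProduct_zero] at this
    rw [dot_conj, dot_transpose] at this
    exact this
  have hcw := hcoer w
  have hKw : 0 ≤ w ⬝ᵥ K *ᵥ w := posdef_nonneg hK w
  have hKw0 : w ⬝ᵥ K *ᵥ w = 0 := by
    rw [dotProduct_comm (Kμ *ᵥ w) w] at hcw
    rw [dotProduct_comm (K *ᵥ w) w] at hcw
    rw [sKw] at hcw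
    nlinarith
  have hw : w = 0 := posdef_zero hK hKw0
  have hz0 : z = 0 := hQu (by rw [show Qu *ᵥ z = 0 from hw, Matrix.mulVec_zero])
  apply hv
  rw [hvel, hx0, hy0, hz0]
  funext i; rcases i with (i | i) | i <;> rfl
end
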